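/- arXiv:1001.1929 — 10 statements merged into one kernel-verified Lean document; each statement's English description precedes it below -/
import Mathlib

section
/- Let f, h ∈ k[[u]] be nonzero power series, let v(f), v(h) be their u-adic orders and f_ℓ, h_m their lowest coefficients (the coefficients in degrees v(f), v(h)). Then there exists a nonzero g ∈ k[[u]] with f·g = g^p·h if and only if v(f) ≥ v(h), v(f) ≡ v(h) (mod p−1), and there exists x ∈ k, x ≠ 0, with x^{p−1}·h_m = f_ℓ. Moreover, if f and h are units of k[[u]], then every nonzero solution g is a unit of k[[u]]. -/
/-!
Write the nonzero series as `f = X ^ v(f) * F`, `g = X ^ v(g) * G`, `h = X ^ v(h) * H` with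
`F, G, H` units (`divXPowOrder`). Both `order` and `divXPowOrder` are multiplicative, so
`f * g = g ^ p * h` splits into the order equation `v(f) + v(g) = p * v(g) + v(h)`, i.e.
`v(f) = v(h) + (p - 1) * v(g)`, and the unit equation `G ^ (p - 1) * H = F`. Reducing the latter
mod `X` gives the condition on lowest coefficients; conversely, since `p - 1 = -1` is invertible
in `k`, Hensel's lemma in the `X`-adically complete ring `k⟦X⟧` lifts a root `x` of
`x ^ (p - 1) = F(0) / H(0)` to a unit root of `G ^ (p - 1) = F * H⁻¹`. If `f` and `h` are units,
the order equation forces `v(g) = 0`.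
-/

open PowerSeries

theorem Nat.exists_add_eq_mul_add_iff {a b n : ℕ} (hn : n ≠ 0) :
    (∃ w, a + w = n * w + b) ↔ b ≤ a ∧ a ≡ b [MOD n - 1] := by
  have hsplit (w : ℕ) : n * w = (n - 1) * w + w := by
    obtain ⟨m, rfl⟩ := Nat.exists_eq_succ_of_ne_zero hn
    simp [Nat.succ_mul]
  constructor
  · rintro ⟨w, hw⟩
    have hab : a = b + (n - 1) * w := by rw [hsplit] at hw; omega
    exact ⟨by omega, ((Nat.modEq_iff_dvd' (by omega)).mpr ⟨w, by omega⟩).symm⟩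
  · rintro ⟨hba, hmod⟩
    obtain ⟨w, hw⟩ := (Nat.modEq_iff_dvd' hba).mp hmod.symm
    exact ⟨w, by rw [hsplit]; omega⟩

theorem mul_eq_pow_mul_iff_eq_pow_pred_mul {M : Type*} [CommMonoidWithZero M]
    [IsRightCancelMulZero M] {a b c : M} {n : ℕ} (hn : n ≠ 0) (hb : b ≠ 0) :
    a * b = b ^ n * c ↔ a = b ^ (n - 1) * c := by
  obtain ⟨m, rfl⟩ := Nat.exists_eq_succ_of_ne_zero hn
  rw [Nat.succ_sub_one, pow_succ, mul_right_comm, mul_left_inj' hb]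

namespace PowerSeries

theorem eq_iff_order_eq_and_divXPowOrder_eq {R : Type*} [Semiring R] {a b : R⟦X⟧} :
    a = b ↔ a.order = b.order ∧ a.divXPowOrder = b.divXPowOrder := by
  refine ⟨fun h => h ▸ ⟨rfl, rfl⟩, fun ⟨ho, hd⟩ => ?_⟩
  rw [← X_pow_order_mul_divXPowOrder (f := a), ← X_pow_order_mul_divXPowOrder (f := b), ho, hd]

theorem mul_eq_pow_mul_iff {R : Type*} [CommSemiring R] [NoZeroDivisors R] [Nontrivial R]
    {f g h : R⟦X⟧} {n : ℕ} :
    f * g = g ^ n * h ↔ f.order + g.order = n • g.order + h.order ∧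
      f.divXPowOrder * g.divXPowOrder = g.divXPowOrder ^ n * h.divXPowOrder := by
  rw [eq_iff_order_eq_and_divXPowOrder_eq, order_mul, order_mul, order_pow, divXPowOrder_mul,
    divXPowOrder_mul, divXPowOrder_pow]

theorem exists_pow_eq_of_constantCoeff_eq_pow {R : Type*} [CommRing R] [Nontrivial R] {n : ℕ}
    (hn : IsUnit (n : R)) {U : R⟦X⟧} {x : R} (hx : IsUnit x) (hU : constantCoeff U = x ^ n) :
    ∃ G : R⟦X⟧, constantCoeff G = x ∧ G ^ n = U := by
  have hn0 : n ≠ 0 := by rintro rfl; simp at hn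
  set P : Polynomial R⟦X⟧ := Polynomial.X ^ n - Polynomial.C U
  have hroot : P.eval (C x) ∈ Ideal.span {X} := by
    simp [P, Ideal.mem_span_singleton, X_dvd_iff, hU]
  have hsimple : IsUnit (Ideal.Quotient.mk (Ideal.span {X}) (P.derivative.eval (C x))) := by
    have : P.derivative.eval (C x) = C ((n : R) * x ^ (n - 1)) := by
      simp [P, Polynomial.derivative_X_pow]
    rw [this]
    exact ((hn.mul (hx.pow _)).map C).map _
  obtain ⟨G, hG, hGx⟩ := HenselianRing.is_henselian P (Polynomial.monic_X_pow_sub_C U hn0) (C x)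
    hroot hsimple
  refine ⟨G, ?_, ?_⟩
  · simpa [Ideal.mem_span_singleton, X_dvd_iff, sub_eq_zero] using hGx
  · simpa [P, Polynomial.IsRoot, sub_eq_zero] using hG

section Field

variable {k : Type*} [Field k]

theorem exists_isUnit_pow_mul_eq_iff {n : ℕ} (hn : (n : k) ≠ 0) {F H : k⟦X⟧}
    (hH : constantCoeff H ≠ 0) :
    (∃ G, IsUnit G ∧ G ^ n * H = F) ↔
      ∃ x : k, x ≠ 0 ∧ x ^ n * constantCoeff H = constantCoeff F := by
  constructor
  · rintro ⟨G, hG, rfl⟩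
    exact ⟨constantCoeff G, (isUnit_iff_constantCoeff.mp hG).ne_zero, by simp⟩
  · rintro ⟨x, hx, hxF⟩
    obtain ⟨G, hGx, hGn⟩ := exists_pow_eq_of_constantCoeff_eq_pow (U := F * H⁻¹) hn.isUnit
      hx.isUnit (by rw [map_mul, constantCoeff_inv, ← hxF, mul_inv_cancel_right₀ hH])
    refine ⟨G, isUnit_iff_constantCoeff.mpr (hGx ▸ hx.isUnit), ?_⟩
    rw [hGn, mul_assoc, PowerSeries.inv_mul_cancel _ hH, mul_one]

theorem exists_ne_zero_mul_eq_pow_mul_iff_order_unit {n : ℕ} (hn : n ≠ 0) {f h : k⟦X⟧}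
    {vf vh : ℕ} (hf : f.order = vf) (hh : h.order = vh) :
    (∃ g, g ≠ 0 ∧ f * g = g ^ n * h) ↔
      (∃ w, vf + w = n * w + vh) ∧
        ∃ G, IsUnit G ∧ G ^ (n - 1) * h.divXPowOrder = f.divXPowOrder := by
  simp only [mul_eq_pow_mul_iff (f := f) (h := h), hf, hh, nsmul_eq_mul]
  constructor
  · rintro ⟨g, hg, hord, hunit⟩
    have hG := isUnit_divided_by_X_pow_order hg
    refine ⟨⟨g.order.toNat, ?_⟩, g.divXPowOrder, hG,
      ((mul_eq_pow_mul_iff_eq_pow_pred_mul hn hG.ne_zero).mp hunit).symm⟩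
    rw [← coe_toNat_order hg] at hord
    exact_mod_cast hord
  · rintro ⟨⟨w, hw⟩, G, hG, hGF⟩
    have hdiv : (X ^ w * G : k⟦X⟧).divXPowOrder = G := by
      rw [divXPowOrder_mul, divXPowOrder_pow, divXPowOrder_X, one_pow, one_mul,
        ← (eq_divided_by_X_pow_order_Iff_Unit hG.ne_zero).mpr hG]
    refine ⟨X ^ w * G, mul_ne_zero (pow_ne_zero _ X_ne_zero) hG.ne_zero, ?_, ?_⟩
    · rw [order_mul, order_X_pow, order_zero_of_unit hG, add_zero]
      exact_mod_cast hw
    · rw [hdiv]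
      exact (mul_eq_pow_mul_iff_eq_pow_pred_mul hn hG.ne_zero).mpr hGF.symm

theorem exists_ne_zero_mul_eq_pow_mul_iff {n : ℕ} (hn : ((n - 1 : ℕ) : k) ≠ 0)
    {f h : k⟦X⟧} {vf vh : ℕ} (hf : f.order = vf) (hh : h.order = vh) :
    (∃ g, g ≠ 0 ∧ f * g = g ^ n * h) ↔
      vh ≤ vf ∧ vf ≡ vh [MOD n - 1] ∧
        ∃ x : k, x ≠ 0 ∧ x ^ (n - 1) * coeff vh h = coeff vf f := by
  have hn0 : n ≠ 0 := by rintro rfl; simp at hn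
  have hH : constantCoeff h.divXPowOrder ≠ 0 :=
    constantCoeff_divXPowOrder_eq_zero_iff.not.mpr (by rintro rfl; simp at hh)
  rw [exists_ne_zero_mul_eq_pow_mul_iff_order_unit hn0 hf hh, Nat.exists_add_eq_mul_add_iff hn0,
    exists_isUnit_pow_mul_eq_iff hn hH, constantCoeff_divXPowOrder, constantCoeff_divXPowOrder,
    hf, hh, ENat.toNat_natCast, ENat.toNat_natCast, and_assoc]

theorem isUnit_of_mul_eq_pow_mul {n : ℕ} (hn : n ≠ 1) {f g h : k⟦X⟧} (hf : IsUnit f)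
    (hh : IsUnit h) (hg : g ≠ 0) (heq : f * g = g ^ n * h) : IsUnit g := by
  have hord := (mul_eq_pow_mul_iff.mp heq).1
  rw [order_zero_of_unit hf, order_zero_of_unit hh, zero_add, add_zero,
    ← coe_toNat_order hg] at hord
  have hw : g.order.toNat = 0 := by
    rw [nsmul_eq_mul] at hord
    have : g.order.toNat * n = g.order.toNat * 1 := by
      rw [mul_one, mul_comm]; exact_mod_cast hord.symm
    by_contra hpos
    exact hn (Nat.eq_of_mul_eq_mul_left (Nat.pos_of_ne_zero hpos) this)
  have := coeff_order hg
  rw [hw, coeff_zero_eq_constantCoeff_apply] at this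
  exact isUnit_iff_constantCoeff.mpr this.isUnit

end Field

end PowerSeries

theorem cyclic_semilinear_solution_iff_general
    (p : ℕ) (hp : p.Prime) (k : Type*) [Field k] [CharP k p]
    (f h : PowerSeries k)
    (vf vh : ℕ)
    (hvf : coeff vf f ≠ 0 ∧ ∀ i < vf, coeff i f = 0)
    (hvh : coeff vh h ≠ 0 ∧ ∀ i < vh, coeff i h = 0) :
    ((∃ g : PowerSeries k, g ≠ 0 ∧ f * g = g ^ p * h) ↔
      (vh ≤ vf ∧ vf ≡ vh [MOD p - 1] ∧
        ∃ x : k, x ≠ 0 ∧ x ^ (p - 1) * coeff vh h = coeff vf f)) ∧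
    (IsUnit f → IsUnit h →
      ∀ g : PowerSeries k, g ≠ 0 → f * g = g ^ p * h → IsUnit g) := by
  have hp1 : ((p - 1 : ℕ) : k) ≠ 0 := by
    rw [Nat.cast_sub hp.one_le, CharP.cast_eq_zero, Nat.cast_one, zero_sub, neg_ne_zero]
    exact one_ne_zero
  exact ⟨exists_ne_zero_mul_eq_pow_mul_iff hp1 (order_eq_nat.mpr hvf) (order_eq_nat.mpr hvh),
    fun hfu hhu _ hg => isUnit_of_mul_eq_pow_mul hp.one_lt.ne' hfu hhu hg⟩

/-- **Lemma (power series solutions of `f·g = φ(g)·h`).**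
Let `k` be a field of characteristic `p`, and `f, h ∈ k[[u]]` nonzero with `u`-adic orders
`vf, vh` and lowest coefficients `coeff vf f`, `coeff vh h`.  Then a nonzero `g ∈ k[[u]]`
with `f·g = g^p·h` (note `φ(g) = g^p` in characteristic `p`) exists iff `vf ≥ vh`,
`vf ≡ vh (mod p−1)`, and the ratio of lowest coefficients is a `(p−1)`-st power in `k^×`.
Moreover, if `f` and `h` are units then every nonzero solution `g` is a unit. -/
theorem cyclic_semilinear_solution_iff
    (p : ℕ) (hp : p.Prime) (k : Type*) [Field k] [CharP k p]
    (f h : PowerSeries k) (hf : f ≠ 0) (hh : h ≠ 0)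
    (vf vh : ℕ)
    (hvf : coeff vf f ≠ 0 ∧ ∀ i < vf, coeff i f = 0)
    (hvh : coeff vh h ≠ 0 ∧ ∀ i < vh, coeff i h = 0) :
    ((∃ g : PowerSeries k, g ≠ 0 ∧ f * g = g ^ p * h) ↔
      (vh ≤ vf ∧ vf ≡ vh [MOD p - 1] ∧
        ∃ x : k, x ≠ 0 ∧ x ^ (p - 1) * coeff vh h = coeff vf f)) ∧
    (IsUnit f → IsUnit h →
      ∀ g : PowerSeries k, g ≠ 0 → f * g = g ^ p * h → IsUnit g) :=
  cyclic_semilinear_solution_iff_general p hp k f h vf vh hvf hvh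
end

section
/- Let b, b' ∈ k be nonzero and let r, r' be natural numbers. There exists a unit g of k[[u]] with b·u^r·g = b'·u^{r'}·g^p if and only if r = r' and b/b' is a (p−1)-st power in k^× (i.e., there exists nonzero x ∈ k with x^{p−1}·b' = b). -/
open PowerSeries

/-!
Since `g` and `g ^ p` are units, comparing `X`-adic orders forces `r = r'`; cancelling `X ^ r`
and reading off constant coefficients gives `b = b' g(0) ^ (p - 1)`. Conversely a constant `g = x` is a witness.
-/

theorem mul_eq_mul_pow_iff {M : Type*} [CommMonoidWithZero M] [IsRightCancelMulZero M]
    {x b b' : M} {n : ℕ} (hx : x ≠ 0) (hn : n ≠ 0) : b * x = b' * x ^ n ↔ x ^ (n - 1) * b' = b := by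
  rw [← pow_sub_one_mul hn, ← mul_assoc, mul_left_inj' hx, mul_comm b', eq_comm]

namespace PowerSeries

theorem X_pow_mul_eq_X_pow_mul_iff {R : Type*} [Semiring R] {r s : ℕ} {u v : R⟦X⟧}
    (hu : constantCoeff u ≠ 0) (hv : constantCoeff v ≠ 0) :
    X ^ r * u = X ^ s * v ↔ r = s ∧ u = v := by
  have exponent_le : ∀ {m n : ℕ} {f g : R⟦X⟧},
      constantCoeff f ≠ 0 → X ^ m * f = X ^ n * g → n ≤ m :=
    fun {m} _ _ _ hf h ↦ not_lt.mp fun hmn ↦ hf <| by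
      simpa [coeff_X_pow_mul', hmn.not_ge] using congrArg (coeff m) h
  refine ⟨fun h ↦ ?_, fun ⟨hrs, huv⟩ ↦ hrs ▸ huv ▸ rfl⟩
  obtain rfl : r = s := le_antisymm (exponent_le hv h.symm) (exponent_le hu h)
  exact ⟨rfl, X_pow_mul_cancel h⟩

end PowerSeries

theorem rank_one_BK_iso_iff_general
    (p : ℕ) (hp : p.Prime) (k : Type*) [Field k]
    (b b' : k) (hb : b ≠ 0) (hb' : b' ≠ 0) (r r' : ℕ) :
    (∃ g : PowerSeries k, IsUnit g ∧
        C b * X ^ r * g = C b' * X ^ r' * g ^ p) ↔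
      (r = r' ∧ ∃ x : k, x ≠ 0 ∧ x ^ (p - 1) * b' = b) := by
  constructor
  · rintro ⟨g, hg, h⟩
    have hg0 : constantCoeff g ≠ 0 := (hg.map constantCoeff).ne_zero
    obtain ⟨rfl, hgp⟩ := (X_pow_mul_eq_X_pow_mul_iff (r := r) (s := r')
      (u := C b * g) (v := C b' * g ^ p) (by simp [hb, hg0]) (by simp [hb', hg0])).mp (by linear_combination h)
    refine ⟨rfl, constantCoeff g, hg0, (mul_eq_mul_pow_iff hg0 hp.ne_zero).mp ?_⟩
    simpa using congrArg constantCoeff hgp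
  · rintro ⟨rfl, x, hx, hxb⟩
    refine ⟨C x, isUnit_iff_constantCoeff.mpr (by simpa using hx.isUnit), ?_⟩
    have hbx := congrArg C ((mul_eq_mul_pow_iff hx hp.ne_zero).mpr hxb)
    rw [map_mul, map_mul, map_pow] at hbx
    linear_combination X ^ r * hbx

/-- **Isomorphism criterion for rank-one mod-`p` Breuil–Kisin modules.**
Let `k` be a field of characteristic `p`, `b, b' ∈ k^×` and `r, r' ∈ ℕ`.  A unit
`g ∈ k[[u]]^×` with `b·u^r·g = b'·u^{r'}·g^p` (i.e. an isomorphism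
`(𝔖₁e₁, φ_{bu^r}) ≅ (𝔖₁e₁, φ_{b'u^{r'}})`, `e₁ ↦ g·e₁`, with `φ(g) = g^p`)
exists iff `r = r'` and `b/b'` is a `(p−1)`-st power in `k^×`. -/
theorem rank_one_BK_iso_iff
    (p : ℕ) (hp : p.Prime) (k : Type*) [Field k] [CharP k p]
    (b b' : k) (hb : b ≠ 0) (hb' : b' ≠ 0) (r r' : ℕ) :
    (∃ g : PowerSeries k, IsUnit g ∧
        C b * X ^ r * g = C b' * X ^ r' * g ^ p) ↔
      (r = r' ∧ ∃ x : k, x ≠ 0 ∧ x ^ (p - 1) * b' = b) :=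
  rank_one_BK_iso_iff_general p hp k b b' hb hb' r r'
end

section
/- Let e ≥ 1 and r be natural numbers with r ≤ e, and let b, c ∈ k be nonzero. There exists a nonzero Laurent series g ∈ k((u)) with b·u^r·g = c⁻¹·u^e·g^p if and only if (p−1) divides e − r and b·c is a (p−1)-st power in k^× (i.e., there exists nonzero x ∈ k with x^{p−1} = b·c). -/
/-!
Comparing orders and leading coefficients of the two sides shows that any nonzero solution `g`
forces the monomial `g.leadingCoeff • u ^ g.order` to be a solution as well, so the equation is
solvable iff it is solvable by a monomial `x u^m`. For a monomial it splits into
`r + m = e + p m`, i.e. `(p - 1) ∣ e - r`, and `b x = c⁻¹ x^p`, i.e. `x^(p-1) = b c`.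
-/

namespace HahnSeries

variable {Γ R : Type*} [AddCommMonoid Γ] [LinearOrder Γ] [IsOrderedCancelAddMonoid Γ]
  [Semiring R] [NoZeroDivisors R]

theorem leadingCoeff_pow (x : R⟦Γ⟧) (n : ℕ) : (x ^ n).leadingCoeff = x.leadingCoeff ^ n := by
  induction n with
  | zero => simp [leadingCoeff_one]
  | succ n ih => rw [pow_succ, leadingCoeff_mul, ih, pow_succ]

theorem exists_ne_zero_single_mul_eq_single_mul_pow_iff {a b : Γ} {r s : R} (hr : r ≠ 0)
    (hs : s ≠ 0) (n : ℕ) :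
    (∃ g : R⟦Γ⟧, g ≠ 0 ∧ single a r * g = single b s * g ^ n) ↔
      (∃ m : Γ, a + m = b + n • m) ∧ ∃ x : R, x ≠ 0 ∧ r * x = s * x ^ n := by
  constructor
  · rintro ⟨g, hg, h⟩
    refine ⟨⟨g.order, ?_⟩, g.leadingCoeff, leadingCoeff_ne_zero.mpr hg, ?_⟩
    · simpa [single_ne_zero, hr, hs, hg, pow_ne_zero n hg] using congrArg order h
    · simpa [leadingCoeff_pow] using congrArg leadingCoeff h
  · rintro ⟨⟨m, hm⟩, x, hx, hrx⟩
    refine ⟨single m x, single_ne_zero hx, ?_⟩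
    rw [single_pow, single_mul_single, single_mul_single, hm, hrx]

end HahnSeries

theorem exists_int_add_eq_add_nsmul_iff_dvd {e r n : ℕ} (hre : r ≤ e) (hn : 1 ≤ n) :
    (∃ m : ℤ, (r : ℤ) + m = e + n • m) ↔ (n - 1) ∣ e - r := by
  rw [← Int.natCast_dvd_natCast, Nat.cast_sub hre, Nat.cast_sub hn]
  constructor
  · rintro ⟨m, hm⟩
    exact ⟨-m, by rw [nsmul_eq_mul] at hm; push_cast; linarith⟩
  · rintro ⟨q, hq⟩
    exact ⟨-q, by rw [nsmul_eq_mul]; push_cast at hq; linarith⟩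

theorem mul_eq_inv_mul_pow_iff {K : Type*} [CommGroupWithZero K] {b c x : K} {n : ℕ}
    (hc : c ≠ 0) (hx : x ≠ 0) (hn : 1 ≤ n) : b * x = c⁻¹ * x ^ n ↔ x ^ (n - 1) = b * c := by
  rw [← Nat.sub_add_cancel hn, pow_succ, ← mul_assoc, mul_left_inj' hx, Nat.add_sub_cancel,
    eq_inv_mul_iff_mul_eq₀ hc, mul_comm, eq_comm]

theorem rank_one_BK_order_in_KCp_iff_general
    (p : ℕ) (hp : p.Prime) (k : Type*) [Field k]
    (e r : ℕ) (hre : r ≤ e)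
    (b c : k) (hb : b ≠ 0) (hc : c ≠ 0) :
    (∃ g : LaurentSeries k, g ≠ 0 ∧
        HahnSeries.single (0 : ℤ) b * HahnSeries.single (r : ℤ) (1 : k) * g
          = HahnSeries.single (0 : ℤ) c⁻¹ * HahnSeries.single (e : ℤ) (1 : k) * g ^ p) ↔
      ((p - 1) ∣ (e - r) ∧ ∃ x : k, x ≠ 0 ∧ x ^ (p - 1) = b * c) := by
  simp only [HahnSeries.single_mul_single, zero_add, mul_one]
  rw [HahnSeries.exists_ne_zero_single_mul_eq_single_mul_pow_iff hb (inv_ne_zero hc),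
    exists_int_add_eq_add_nsmul_iff_dvd hre hp.one_le]
  exact and_congr_right fun _ ↦ exists_congr fun x ↦
    and_congr_right fun hx ↦ mul_eq_inv_mul_pow_iff hc hx hp.one_le

/-- **Hopf orders in `KC_p` from rank-one Breuil–Kisin modules.**
Let `k` be a field of characteristic `p`, `e ≥ 1`, `r ≤ e` natural numbers and
`b, c ∈ k^×`.  A nonzero Laurent series `g ∈ k((u))` with
`b·u^r·g = c⁻¹·u^e·g^p` (an isomorphism `(𝔖₁e₁[u⁻¹], φ_{bu^r}) ≅ (𝔖₁e₁[u⁻¹], φ_{c⁻¹u^e})`,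
with `φ(g) = g^p` in characteristic `p`) exists iff `(p−1) ∣ e − r` and
`b·c` is a `(p−1)`-st power in `k^×`. -/
theorem rank_one_BK_order_in_KCp_iff
    (p : ℕ) (hp : p.Prime) (k : Type*) [Field k] [CharP k p]
    (e r : ℕ) (he : 1 ≤ e) (hre : r ≤ e)
    (b c : k) (hb : b ≠ 0) (hc : c ≠ 0) :
    (∃ g : LaurentSeries k, g ≠ 0 ∧
        HahnSeries.single (0 : ℤ) b * HahnSeries.single (r : ℤ) (1 : k) * g
          = HahnSeries.single (0 : ℤ) c⁻¹ * HahnSeries.single (e : ℤ) (1 : k) * g ^ p) ↔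
      ((p - 1) ∣ (e - r) ∧ ∃ x : k, x ≠ 0 ∧ x ^ (p - 1) = b * c) :=
  rank_one_BK_order_in_KCp_iff_general p hp k e r hre b c hb hc
end

section
/- Let b, b' ∈ k be nonzero and let r, r' be integers. There exists a nonzero Laurent series g ∈ k((u)) with b·u^r·g = b'·u^{r'}·g^p if and only if r ≡ r' (mod p−1) and b/b' is a (p−1)-st power in k^× (i.e., there exists nonzero x ∈ k with x^{p−1}·b' = b). -/
/-! Comparing orders and leading coefficients of the two sides of `b·u^r·g = b'·u^{r'}·g^p`
gives `r + ord g = r' + p·ord g` and `b·c = b'·c^p` for the leading coefficient `c` of `g`;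
conversely any solution `(m, c)` of these two equations yields the monomial solution `g = c·u^m`. -/

namespace HahnSeries

variable {Γ R : Type*} [AddCommMonoid Γ] [LinearOrder Γ] [IsOrderedCancelAddMonoid Γ]
  [Semiring R] [NoZeroDivisors R]

theorem exists_single_mul_eq_single_mul_pow_iff {a a' : Γ} {b b' : R} (hb : b ≠ 0)
    (hb' : b' ≠ 0) (n : ℕ) :
    (∃ g : R⟦Γ⟧, g ≠ 0 ∧ single a b * g = single a' b' * g ^ n) ↔
      (∃ m : Γ, a + m = a' + n • m) ∧ ∃ x : R, x ≠ 0 ∧ b * x = b' * x ^ n := by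
  constructor
  · rintro ⟨g, hg, heq⟩
    have hgn : g ^ n ≠ 0 := pow_ne_zero n hg
    have horder := congrArg order heq
    rw [order_mul (single_ne_zero hb) hg, order_mul (single_ne_zero hb') hgn,
      order_single hb, order_single hb', order_pow] at horder
    have hlead := congrArg leadingCoeff heq
    rw [leadingCoeff_mul, leadingCoeff_mul, leadingCoeff_pow, leadingCoeff_of_single,
      leadingCoeff_of_single] at hlead
    exact ⟨⟨g.order, horder⟩, g.leadingCoeff, leadingCoeff_ne_zero.mpr hg, hlead⟩
  · rintro ⟨⟨m, hm⟩, x, hx, hcoeff⟩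
    refine ⟨single m x, single_ne_zero hx, ?_⟩
    rw [single_pow, single_mul_single, single_mul_single, hm, hcoeff]

end HahnSeries

theorem Int.exists_add_eq_add_mul_iff_dvd (r r' n : ℤ) :
    (∃ m : ℤ, r + m = r' + n * m) ↔ (n - 1) ∣ (r - r') :=
  ⟨fun ⟨m, hm⟩ ↦ ⟨m, by linear_combination hm⟩, fun ⟨m, hm⟩ ↦ ⟨m, by linear_combination hm⟩⟩

theorem mul_eq_mul_pow_iff_pow_pred_mul_eq {M : Type*} [CommMonoidWithZero M]
    [IsCancelMulZero M] {x : M} (hx : x ≠ 0) {n : ℕ} (hn : n ≠ 0) (b b' : M) :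
    b * x = b' * x ^ n ↔ x ^ (n - 1) * b' = b := by
  obtain ⟨n, rfl⟩ := Nat.exists_eq_add_one_of_ne_zero hn
  rw [pow_succ, ← mul_assoc, mul_left_inj' hx, Nat.add_sub_cancel, mul_comm, eq_comm]

theorem rank_one_BK_generic_iso_iff_general
    (p : ℕ) (hp : p.Prime) (k : Type*) [Field k]
    (b b' : k) (hb : b ≠ 0) (hb' : b' ≠ 0) (r r' : ℤ) :
    (∃ g : LaurentSeries k, g ≠ 0 ∧
        HahnSeries.single (0 : ℤ) b * HahnSeries.single r (1 : k) * g
          = HahnSeries.single (0 : ℤ) b' * HahnSeries.single r' (1 : k) * g ^ p) ↔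
      (((p : ℤ) - 1) ∣ (r - r') ∧ ∃ x : k, x ≠ 0 ∧ x ^ (p - 1) * b' = b) := by
  simp only [HahnSeries.single_mul_single, zero_add, mul_one]
  rw [HahnSeries.exists_single_mul_eq_single_mul_pow_iff hb hb']
  simp only [nsmul_eq_mul, Int.exists_add_eq_add_mul_iff_dvd]
  exact and_congr_right' <| exists_congr fun x ↦ and_congr_right fun hx ↦
    mul_eq_mul_pow_iff_pow_pred_mul_eq hx hp.ne_zero b b'

/-- **Generic isomorphism criterion for rank-one mod-`p` Breuil–Kisin modules.**
Let `k` be a field of characteristic `p`, `b, b' ∈ k^×` and `r, r' ∈ ℤ`.  A nonzero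
Laurent series `g ∈ k((u))` with `b·u^r·g = b'·u^{r'}·g^p` (an isomorphism
`(𝔖₁e₁[u⁻¹], φ_{bu^r}) ≅ (𝔖₁e₁[u⁻¹], φ_{b'u^{r'}})`, with `φ(g) = g^p`) exists iff
`r ≡ r' (mod p−1)` and `b/b'` is a `(p−1)`-st power in `k^×`. -/
theorem rank_one_BK_generic_iso_iff
    (p : ℕ) (hp : p.Prime) (k : Type*) [Field k] [CharP k p]
    (b b' : k) (hb : b ≠ 0) (hb' : b' ≠ 0) (r r' : ℤ) :
    (∃ g : LaurentSeries k, g ≠ 0 ∧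
        HahnSeries.single (0 : ℤ) b * HahnSeries.single r (1 : k) * g
          = HahnSeries.single (0 : ℤ) b' * HahnSeries.single r' (1 : k) * g ^ p) ↔
      (((p : ℤ) - 1) ∣ (r - r') ∧ ∃ x : k, x ≠ 0 ∧ x ^ (p - 1) * b' = b) :=
  rank_one_BK_generic_iso_iff_general p hp k b b' hb hb' r r'
end

section
/- Let f ∈ W[[u]] be a power series whose constant coefficient f(0) is a unit of W. Then there exists a unique g ∈ W[[u]] with constant coefficient 1 such that f·g = f(0)·φ(g). -/
open PowerSeries

/-!
Writing `c = f(0)`, the equation `f·g = c·φ(g)` says that `g` is a fixed point of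
`Φ g = f⁻¹·c·φ(g)`. Since `φ` multiplies `u`-adic valuations by `p ≥ 2`, `Φ` is a contraction for
the `u`-adic topology: if `g ≡ g' mod uⁿ⁺¹` then `Φ g ≡ Φ g' mod uⁿ⁺²`. Such a map has exactly one
fixed point with prescribed constant coefficient; its coefficients are found one degree at a time.
-/

/-- The Frobenius-semilinear map `φ` on `W(k)[[u]]`, sending `Σ wᵢ uⁱ` to `Σ F(wᵢ) u^{p·i}`,
where `F = WittVector.frobenius` is the Witt-vector Frobenius. -/
noncomputable def phiPS (p : ℕ) [Fact p.Prime] {k : Type*} [CommRing k]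
    (g : PowerSeries (WittVector p k)) : PowerSeries (WittVector p k) :=
  PowerSeries.mk fun j =>
    if p ∣ j then WittVector.frobenius (PowerSeries.coeff (j / p) g) else 0

namespace PowerSeries

variable {R : Type*}

theorem X_pow_dvd_sub_iff [Ring R] {n : ℕ} {f g : R⟦X⟧} :
    X ^ n ∣ f - g ↔ ∀ m < n, coeff m f = coeff m g := by
  simp only [X_pow_dvd_iff, map_sub, sub_eq_zero]

noncomputable def contractionFixedPointCoeff [Semiring R] (Φ : R⟦X⟧ → R⟦X⟧) (a : R) : ℕ → R
  | 0 => a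
  | n + 1 => coeff (n + 1)
      (Φ (mk fun m => if m ≤ n then contractionFixedPointCoeff Φ a m else 0))

theorem existsUnique_fixedPoint_of_X_pow_dvd_sub [Ring R] (Φ : R⟦X⟧ → R⟦X⟧) (a : R)
    (hΦ₀ : ∀ g, constantCoeff g = a → constantCoeff (Φ g) = a)
    (hΦ : ∀ n g g', X ^ (n + 1) ∣ g - g' → X ^ (n + 2) ∣ Φ g - Φ g') :
    ∃! g : R⟦X⟧, constantCoeff g = a ∧ Φ g = g := by
  set g := mk (contractionFixedPointCoeff Φ a)
  have hg₀ : constantCoeff g = a := by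
    simp [g, contractionFixedPointCoeff]
  have hfix : Φ g = g := by
    ext (_ | n)
    · simpa [hg₀] using hΦ₀ g hg₀
    · set t := mk fun m => if m ≤ n then contractionFixedPointCoeff Φ a m else 0
      have hgt : X ^ (n + 1) ∣ g - t :=
        X_pow_dvd_sub_iff.mpr fun m hm => by simp [g, t, Nat.le_of_lt_succ hm]
      rw [X_pow_dvd_sub_iff.mp (hΦ n g t hgt) (n + 1) (by omega)]
      simp only [g, t, coeff_mk, contractionFixedPointCoeff]
  refine ⟨g, ⟨hg₀, hfix⟩, fun g' ⟨hg'₀, hg'⟩ => ?_⟩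
  have hdvd : ∀ n, X ^ (n + 1) ∣ g' - g := by
    intro n
    induction n with
    | zero =>
      exact X_pow_dvd_sub_iff.mpr fun m hm => by simp [Nat.lt_one_iff.mp hm, hg₀, hg'₀]
    | succ n ih => simpa [hg', hfix] using hΦ n g' g ih
  ext m
  exact X_pow_dvd_sub_iff.mp (hdvd m) m m.lt_succ_self

theorem existsUnique_mul_eq_C_constantCoeff_mul [CommRing R] (φ : R⟦X⟧ → R⟦X⟧)
    (hφ₀ : ∀ g, constantCoeff g = 1 → constantCoeff (φ g) = 1)
    (hφ : ∀ n g g', X ^ (n + 1) ∣ g - g' → X ^ (n + 2) ∣ φ g - φ g')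
    {f : R⟦X⟧} (hf : IsUnit (constantCoeff f)) :
    ∃! g : R⟦X⟧, constantCoeff g = 1 ∧ f * g = C (constantCoeff f) * φ g := by
  obtain ⟨U, rfl⟩ := isUnit_iff_constantCoeff.mpr hf
  set c := constantCoeff (U : R⟦X⟧)
  refine (existsUnique_congr fun g => ?_).mp
    (existsUnique_fixedPoint_of_X_pow_dvd_sub (fun g => ↑U⁻¹ * (C c * φ g)) 1 ?_ ?_)
  · rw [Units.inv_mul_eq_iff_eq_mul, eq_comm (a := C c * φ g)]
  · intro g hg
    rw [map_mul, map_mul, constantCoeff_C, hφ₀ g hg, mul_one, ← map_mul, Units.inv_mul, map_one]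
  · intro n g g' h
    rw [← mul_sub, ← mul_sub]
    exact ((hφ n g g' h).mul_left _).mul_left _

end PowerSeries

section phiPS

variable (p : ℕ) [Fact p.Prime] {k : Type*} [CommRing k]

theorem coeff_phiPS (g : PowerSeries (WittVector p k)) (j : ℕ) :
    coeff j (phiPS p g) = if p ∣ j then WittVector.frobenius (coeff (j / p) g) else 0 := by
  simp [phiPS]

theorem constantCoeff_phiPS (g : PowerSeries (WittVector p k)) :
    constantCoeff (phiPS p g) = WittVector.frobenius (constantCoeff g) := by
  simpa using coeff_phiPS p g 0

theorem X_pow_mul_dvd_phiPS_sub {n : ℕ} {g g' : PowerSeries (WittVector p k)}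
    (h : X ^ n ∣ g - g') : X ^ (p * n) ∣ phiPS p g - phiPS p g' := by
  rw [PowerSeries.X_pow_dvd_sub_iff] at h ⊢
  intro m hm
  rw [coeff_phiPS, coeff_phiPS, h (m / p) (Nat.div_lt_of_lt_mul hm)]

end phiPS

theorem cyclic_BK_normal_form_general
    (p : ℕ) [Fact p.Prime] (k : Type*) [Field k]
    (f : PowerSeries (WittVector p k))
    (hf : IsUnit (constantCoeff f)) :
    ∃! g : PowerSeries (WittVector p k),
      constantCoeff g = 1 ∧
        f * g = C (constantCoeff f) * phiPS p g := by
  refine existsUnique_mul_eq_C_constantCoeff_mul (phiPS p) (fun g hg => ?_) (fun n g g' h => ?_) hf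
  · rw [constantCoeff_phiPS, hg, map_one]
  · have hp : 2 ≤ p := (Fact.out : p.Prime).two_le
    exact (pow_dvd_pow X (by nlinarith)).trans (X_pow_mul_dvd_phiPS_sub p h)

/-- **Normal-form lemma for cyclic Breuil–Kisin modules (unit constant term).**
Let `W = W(k)` be the Witt vectors of a perfect field `k` of characteristic `p`, and let
`f ∈ W[[u]]` have unit constant coefficient `f(0)`.  Then there exists a unique
`g ∈ W[[u]]` with constant coefficient `1` such that `f·g = f(0)·φ(g)`. -/
theorem cyclic_BK_normal_form
    (p : ℕ) [Fact p.Prime] (k : Type*) [Field k] [CharP k p] [PerfectRing k p]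
    (f : PowerSeries (WittVector p k))
    (hf : IsUnit (constantCoeff f)) :
    ∃! g : PowerSeries (WittVector p k),
      constantCoeff g = 1 ∧
        f * g = C (constantCoeff f) * phiPS p g :=
  cyclic_BK_normal_form_general p k f hf
end

section
/- Let E be an Eisenstein polynomial of degree e over W. If f, s ∈ W[[u]] satisfy f·s ≡ E (mod p²), then the reduction of f mod p is a nonzero element of k[[u]] whose u-adic order is either 0 or e. -/
open PowerSeries

/-!
Reducing modulo the prime `p`, the congruence `f * s ≡ E (mod p)` becomes `f̄ * s̄ = u ^ e` in
`k⟦u⟧`, so `ord f̄ + ord s̄ = e`; in particular `f̄ ≠ 0`. If both orders were positive, `p` would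
divide the constant terms of `f` and `s`, so `p²` would divide that of `f * s`, which is
`≡ p * c₀ (mod p²)`; hence `p ∣ c₀`, contradicting that `c₀` is a unit.
-/

namespace PowerSeries

variable {R : Type*} [CommRing R] {π : R}

theorem coeff_map_mk_span_singleton_eq_zero_iff (f : R⟦X⟧) (n : ℕ) :
    coeff n (map (Ideal.Quotient.mk (Ideal.span {π})) f) = 0 ↔ π ∣ coeff n f := by
  rw [coeff_map, Ideal.Quotient.eq_zero_iff_dvd]

theorem order_map_mk_span_singleton_eq_iff (f : R⟦X⟧) (v : ℕ) :
    (map (Ideal.Quotient.mk (Ideal.span {π})) f).order = v ↔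
      ¬ π ∣ coeff v f ∧ ∀ i < v, π ∣ coeff i f := by
  simp only [order_eq_nat, ne_eq, coeff_map_mk_span_singleton_eq_zero_iff]

theorem map_mk_mul_map_mk_eq_X_pow {f s F : R⟦X⟧} {e : ℕ}
    (h : ∀ j, π ∣ coeff j (f * s - (X ^ e + C π * F))) :
    map (Ideal.Quotient.mk (Ideal.span {π})) f * map (Ideal.Quotient.mk (Ideal.span {π})) s =
      X ^ e := by
  rw [← map_mul, ← sub_eq_zero]
  ext j
  simpa [sub_eq_add_neg, add_assoc] using (coeff_map_mk_span_singleton_eq_zero_iff _ j).2 (h j)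

theorem coeff_zero_mul_sub_X_pow_add_C_mul {f s F : R⟦X⟧} {e : ℕ} (he : e ≠ 0) (c : R) :
    coeff 0 (f * s - (X ^ e + C c * F)) =
      constantCoeff f * constantCoeff s - c * constantCoeff F := by
  simp [zero_pow he]

end PowerSeries

theorem Prime.dvd_of_sq_dvd_mul_sub_mul {R : Type*} [CommRing R] [IsDomain R] {π a b c : R}
    (hπ : Prime π) (ha : π ∣ a) (hb : π ∣ b) (h : π ^ 2 ∣ a * b - π * c) : π ∣ c := by
  have hab : π ^ 2 ∣ a * b := sq π ▸ mul_dvd_mul ha hb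
  have hπc : π * π ∣ π * c := by simpa [sq] using (dvd_sub hab h)
  exact (mul_dvd_mul_iff_left hπ.ne_zero).mp hπc

theorem Prime.order_map_mk_eq_zero_or_eq {R : Type*} [CommRing R] [IsDomain R] {π : R}
    (hπ : Prime π) {f s F : R⟦X⟧} {e : ℕ} (hF : ¬ π ∣ constantCoeff F)
    (h : ∀ j, π ^ 2 ∣ coeff j (f * s - (X ^ e + C π * F))) :
    (map (Ideal.Quotient.mk (Ideal.span {π})) f).order = 0 ∨
      (map (Ideal.Quotient.mk (Ideal.span {π})) f).order = e := by
  have : (Ideal.span {π}).IsPrime := (Ideal.span_singleton_prime hπ.ne_zero).mpr hπ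
  set f' := map (Ideal.Quotient.mk (Ideal.span {π})) f
  set s' := map (Ideal.Quotient.mk (Ideal.span {π})) s
  have hord : f'.order + s'.order = e := by
    rw [← order_mul, map_mk_mul_map_mk_eq_X_pow fun j => (dvd_pow_self π two_ne_zero).trans (h j),
      order_X_pow]
  by_contra! hne
  obtain ⟨hf0, hfe⟩ := hne
  have hs0 : s'.order ≠ 0 := fun hs => hfe (by simpa [hs] using hord)
  have he : e ≠ 0 := by
    rintro rfl
    exact hf0 (add_eq_zero.mp (by exact_mod_cast hord)).1
  have hπf : π ∣ constantCoeff f := by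
    rw [← coeff_zero_eq_constantCoeff_apply, ← coeff_map_mk_span_singleton_eq_zero_iff]
    exact coeff_of_lt_order 0 (pos_iff_ne_zero.mpr hf0)
  have hπs : π ∣ constantCoeff s := by
    rw [← coeff_zero_eq_constantCoeff_apply, ← coeff_map_mk_span_singleton_eq_zero_iff]
    exact coeff_of_lt_order 0 (pos_iff_ne_zero.mpr hs0)
  have h0 := h 0
  rw [coeff_zero_mul_sub_X_pow_add_C_mul he] at h0
  exact hF (hπ.dvd_of_sq_dvd_mul_sub_mul hπf hπs h0)

theorem eisenstein_factor_order_dichotomy_general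
    (p : ℕ) [Fact p.Prime] (k : Type*) [Field k] [CharP k p] [PerfectRing k p]
    (e : ℕ)
    (F0 : PowerSeries (WittVector p k))
    (hc0 : IsUnit (constantCoeff (R := WittVector p k) F0))
    (f s : PowerSeries (WittVector p k))
    (hfs : ∀ j : ℕ, (p : WittVector p k) ^ 2 ∣
        coeff (R := WittVector p k) j
          (f * s - (X ^ e + C (R := WittVector p k) (p : WittVector p k) * F0))) :
    (∃ j : ℕ, ¬ (p : WittVector p k) ∣ coeff (R := WittVector p k) j f) ∧
      ∀ v : ℕ,
        (¬ (p : WittVector p k) ∣ coeff (R := WittVector p k) v f ∧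
          ∀ i < v, (p : WittVector p k) ∣ coeff (R := WittVector p k) i f) →
        v = 0 ∨ v = e := by
  have hp : Prime (p : WittVector p k) := (WittVector.irreducible p).prime
  have hord := hp.order_map_mk_eq_zero_or_eq
    (fun hdvd => hp.not_isUnit (isUnit_of_dvd_unit hdvd hc0)) hfs
  refine ⟨?_, fun v hv => ?_⟩
  · rcases hord with h | h
    · exact ⟨0, ((order_map_mk_span_singleton_eq_iff f 0).mp (mod_cast h)).1⟩
    · exact ⟨e, ((order_map_mk_span_singleton_eq_iff f e).mp h).1⟩
  · rw [← order_map_mk_span_singleton_eq_iff] at hv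
    rw [hv] at hord
    exact_mod_cast hord

/-- **Dichotomy for factors of an Eisenstein polynomial mod `p²`.**
Let `W = W(k)` for `k` a perfect field of characteristic `p`, and let
`E = u^e + p·F₀` be an Eisenstein polynomial of degree `e ≥ 1` over `W`
(`F₀` of degree `< e` with unit constant term `c₀`).  If `f, s ∈ W[[u]]` satisfy
`f·s ≡ E (mod p²)` (coefficientwise), then the reduction of `f` mod `p` is a nonzero
element of `k[[u]]` (some coefficient of `f` is not divisible by `p`) whose `u`-adic
order is either `0` or `e`. -/
theorem eisenstein_factor_order_dichotomy
    (p : ℕ) [Fact p.Prime] (k : Type*) [Field k] [CharP k p] [PerfectRing k p]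
    (e : ℕ) (he : 1 ≤ e)
    (F0 : PowerSeries (WittVector p k))
    (hF0deg : ∀ i : ℕ, e ≤ i → coeff (R := WittVector p k) i F0 = 0)
    (hc0 : IsUnit (constantCoeff (R := WittVector p k) F0))
    (f s : PowerSeries (WittVector p k))
    (hfs : ∀ j : ℕ, (p : WittVector p k) ^ 2 ∣
        coeff (R := WittVector p k) j
          (f * s - (X ^ e + C (R := WittVector p k) (p : WittVector p k) * F0))) :
    (∃ j : ℕ, ¬ (p : WittVector p k) ∣ coeff (R := WittVector p k) j f) ∧
      ∀ v : ℕ,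
        (¬ (p : WittVector p k) ∣ coeff (R := WittVector p k) v f ∧
          ∀ i < v, (p : WittVector p k) ∣ coeff (R := WittVector p k) i f) →
        v = 0 ∨ v = e :=
  eisenstein_factor_order_dichotomy_general p k e F0 hc0 f s hfs
end

section
/- Let n ≥ 2 and let E be an Eisenstein polynomial of degree e over W. If f, s ∈ W[[u]] satisfy f·s ≡ E (mod p^n), then there exist a unit b of W and a power series g ∈ W[[u]] with constant coefficient 1 such that either f·g ≡ b·φ(g) (mod p^n) or f·g ≡ b·E·φ(g) (mod p^n). -/
/-!
Modulo `p²` the constant coefficient of `f·s` is `p·c₀` with `c₀` a unit, so one of `f(0)`, `s(0)`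
is a unit of the discrete valuation ring `W`. For any power series `a` with `a(0) = 1` the equation
`g = a·φ(g)` has a solution with `g(0) = 1`, found coefficient by coefficient since the `j`-th
coefficient of `φ(g)` only involves coefficients of `g` of index at most `j / p`. Taking
`a = f(0)·f⁻¹` gives `f·g = f(0)·φ(g)` exactly; taking `a = s(0)⁻¹·s` gives
`f·g - s(0)⁻¹·E·φ(g) = (f·s - E)·s(0)⁻¹·φ(g) ≡ 0 (mod pⁿ)`.
-/

open PowerSeries

theorem IsDiscreteValuationRing.isUnit_or_isUnit_of_sq_dvd_mul_sub {R : Type*} [CommRing R]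
    [IsDomain R] [IsDiscreteValuationRing R] {ϖ x y c : R} (hϖ : Irreducible ϖ) (hc : IsUnit c)
    (h : ϖ ^ 2 ∣ x * y - ϖ * c) : IsUnit x ∨ IsUnit y := by
  have dvd_of_not_isUnit {z : R} (hz : ¬IsUnit z) : ϖ ∣ z := by
    rwa [← Ideal.mem_span_singleton, ← hϖ.maximalIdeal_eq, IsLocalRing.mem_maximalIdeal]
  by_contra! ⟨hx, hy⟩
  have hxy : ϖ * ϖ ∣ x * y := mul_dvd_mul (dvd_of_not_isUnit hx) (dvd_of_not_isUnit hy)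
  have hϖc : ϖ * ϖ ∣ ϖ * c := by
    rw [← pow_two]; exact (dvd_sub_right (pow_two ϖ ▸ hxy)).mp h
  exact hϖ.not_isUnit (isUnit_of_dvd_unit ((mul_dvd_mul_iff_left hϖ.ne_zero).mp hϖc) hc)

namespace PowerSeries

section Semiring

variable {R : Type*} [Semiring R] (σ : R →+* R) {q : ℕ}

noncomputable def frobeniusTwist (q : ℕ) (g : R⟦X⟧) : R⟦X⟧ :=
  mk fun j => if q ∣ j then σ (coeff (j / q) g) else 0

theorem coeff_frobeniusTwist (g : R⟦X⟧) (j : ℕ) :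
    coeff j (frobeniusTwist σ q g) = if q ∣ j then σ (coeff (j / q) g) else 0 :=
  coeff_mk _ _

/-- Coefficients of the solution of `g = a · frobeniusTwist σ q g` with `g(0) = 1`. -/
noncomputable def twistFixedCoeff (hq : 1 < q) (a : R⟦X⟧) : ℕ → R
  | 0 => 1
  | j + 1 => ∑ i ∈ Finset.range (j + 2),
      coeff i a * if q ∣ j + 1 - i then σ (twistFixedCoeff hq a ((j + 1 - i) / q)) else 0
  decreasing_by
    exact (Nat.div_le_div_right (Nat.sub_le _ _)).trans_lt (Nat.div_lt_self j.succ_pos hq)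

theorem exists_eq_mul_frobeniusTwist (hq : 1 < q) {a : R⟦X⟧} (ha : constantCoeff a = 1) :
    ∃ g : R⟦X⟧, constantCoeff g = 1 ∧ g = a * frobeniusTwist σ q g := by
  refine ⟨mk (twistFixedCoeff σ hq a), by rw [constantCoeff_mk, twistFixedCoeff], ?_⟩
  ext j
  rw [coeff_mul]
  cases j with
  | zero =>
    simp [coeff_frobeniusTwist, twistFixedCoeff, ha]
  | succ j =>
    rw [Finset.Nat.sum_antidiagonal_eq_sum_range_succ
      (fun i l => coeff i a * coeff l (frobeniusTwist σ q (mk (twistFixedCoeff σ hq a))))]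
    simp only [coeff_mk, coeff_frobeniusTwist, twistFixedCoeff]

end Semiring

section CommRing

variable {R : Type*} [CommRing R] (σ : R →+* R) {q : ℕ}

theorem exists_mul_eq_C_mul_frobeniusTwist (hq : 1 < q) {f : R⟦X⟧}
    (hf : IsUnit (constantCoeff f)) :
    ∃ (b : R) (g : R⟦X⟧), IsUnit b ∧ constantCoeff g = 1 ∧ f * g = C b * frobeniusTwist σ q g := by
  obtain ⟨F, rfl⟩ := isUnit_iff_constantCoeff.mpr hf
  obtain ⟨g, hg0, hg⟩ := exists_eq_mul_frobeniusTwist σ hq (a := C (constantCoeff F.val) * ↑F⁻¹)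
    (by rw [map_mul, constantCoeff_C, ← map_mul, Units.mul_inv, map_one])
  refine ⟨_, g, hf, hg0, ?_⟩
  linear_combination (F : R⟦X⟧) * hg + C (constantCoeff F.val) * frobeniusTwist σ q g * F.mul_inv

theorem exists_eq_C_mul_mul_frobeniusTwist (hq : 1 < q) {s : R⟦X⟧}
    (hs : IsUnit (constantCoeff s)) :
    ∃ (b : R) (g : R⟦X⟧), IsUnit b ∧ constantCoeff g = 1 ∧ g = C b * s * frobeniusTwist σ q g := by
  obtain ⟨u, hu⟩ := hs
  obtain ⟨g, hg0, hg⟩ := exists_eq_mul_frobeniusTwist σ hq (a := C (↑u⁻¹ : R) * s)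
    (by rw [map_mul, constantCoeff_C, ← hu, Units.inv_mul])
  exact ⟨_, g, u⁻¹.isUnit, hg0, hg⟩

end CommRing

theorem dvd_coeff_mul_of_dvd_coeff {R : Type*} [CommSemiring R] {r : R} {F : R⟦X⟧}
    (hF : ∀ j, r ∣ coeff j F) (G : R⟦X⟧) (j : ℕ) : r ∣ coeff j (F * G) := by
  rw [coeff_mul]
  exact Finset.dvd_sum fun ij _ => dvd_mul_of_dvd_left (hF ij.1) _

end PowerSeries

theorem phiPS_eq_frobeniusTwist (p : ℕ) [Fact p.Prime] {k : Type*} [CommRing k] :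
    phiPS p (k := k) = frobeniusTwist WittVector.frobenius p :=
  rfl

theorem cyclic_BK_classification_general
    (p n : ℕ) [Fact p.Prime] (hn : 2 ≤ n)
    (k : Type*) [Field k] [CharP k p] [PerfectRing k p]
    (e : ℕ) (he : 1 ≤ e)
    (F0 : PowerSeries (WittVector p k))
    (hc0 : IsUnit (constantCoeff F0))
    (f s : PowerSeries (WittVector p k))
    (hfs : ∀ j : ℕ, (p : WittVector p k) ^ n ∣
        coeff j
          (f * s - (X ^ e + C (p : WittVector p k) * F0))) :
    ∃ (b : WittVector p k) (g : PowerSeries (WittVector p k)),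
      IsUnit b ∧ constantCoeff g = 1 ∧
      ((∀ j : ℕ, (p : WittVector p k) ^ n ∣
          coeff j (f * g - C b * phiPS p g)) ∨
       (∀ j : ℕ, (p : WittVector p k) ^ n ∣
          coeff j
            (f * g - C b *
              (X ^ e + C (p : WittVector p k) * F0) * phiPS p g))) := by
  have hp : 1 < p := (Fact.out : p.Prime).one_lt
  have hconst : (p : WittVector p k) ^ 2 ∣
      constantCoeff f * constantCoeff s - p * constantCoeff F0 := by
    refine (pow_dvd_pow _ hn).trans ?_
    simpa [zero_pow (Nat.one_le_iff_ne_zero.mp he)] using hfs 0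
  rw [phiPS_eq_frobeniusTwist]
  rcases IsDiscreteValuationRing.isUnit_or_isUnit_of_sq_dvd_mul_sub
      (WittVector.irreducible p) hc0 hconst with hf | hs
  · obtain ⟨b, g, hb, hg0, hfg⟩ := exists_mul_eq_C_mul_frobeniusTwist WittVector.frobenius hp hf
    exact ⟨b, g, hb, hg0, Or.inl fun j => by simp [hfg]⟩
  · obtain ⟨b, g, hb, hg0, hg⟩ := exists_eq_C_mul_mul_frobeniusTwist WittVector.frobenius hp hs
    refine ⟨b, g, hb, hg0, Or.inr fun j => ?_⟩
    rw [show f * g - C b * (X ^ e + C ↑p * F0) * frobeniusTwist WittVector.frobenius p g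
        = (f * s - (X ^ e + C ↑p * F0)) * (C b * frobeniusTwist WittVector.frobenius p g) by
      linear_combination f * hg]
    exact dvd_coeff_mul_of_dvd_coeff hfs _ j

/-- **Classification of cyclic Breuil–Kisin modules for `n ≥ 2`.**
Let `W = W(k)` for `k` a perfect field of characteristic `p`, `n ≥ 2`, and
`E = u^e + p·F₀` an Eisenstein polynomial of degree `e ≥ 1` over `W`.  If
`f, s ∈ W[[u]]` satisfy `f·s ≡ E (mod pⁿ)`, then there exist a unit `b` of `W` and
`g ∈ W[[u]]` with constant coefficient `1` such that either `f·g ≡ b·φ(g) (mod pⁿ)`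
(multiplicative type) or `f·g ≡ b·E·φ(g) (mod pⁿ)` (étale type). -/
theorem cyclic_BK_classification
    (p n : ℕ) [Fact p.Prime] (hn : 2 ≤ n)
    (k : Type*) [Field k] [CharP k p] [PerfectRing k p]
    (e : ℕ) (he : 1 ≤ e)
    (F0 : PowerSeries (WittVector p k))
    (hF0deg : ∀ i : ℕ, e ≤ i → coeff i F0 = 0)
    (hc0 : IsUnit (constantCoeff F0))
    (f s : PowerSeries (WittVector p k))
    (hfs : ∀ j : ℕ, (p : WittVector p k) ^ n ∣
        coeff j
          (f * s - (X ^ e + C (p : WittVector p k) * F0))) :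
    ∃ (b : WittVector p k) (g : PowerSeries (WittVector p k)),
      IsUnit b ∧ constantCoeff g = 1 ∧
      ((∀ j : ℕ, (p : WittVector p k) ^ n ∣
          coeff j (f * g - C b * phiPS p g)) ∨
       (∀ j : ℕ, (p : WittVector p k) ^ n ∣
          coeff j
            (f * g - C b *
              (X ^ e + C (p : WittVector p k) * F0) * phiPS p g))) :=
  cyclic_BK_classification_general p n hn k e he F0 hc0 f s hfs
end

section
/- Let n ≥ 1, let b, c be units of W, and let h ∈ W((u)) be a Laurent series satisfying b·h ≡ c·φ(h) (mod p^n). Then h is congruent mod p^n to its coefficient h₀ in degree 0 (in particular every coefficient of h in nonzero degree is divisible by p^n). If moreover the reduction of h mod p is nonzero in k((u)), then h₀ is a unit of W. -/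
/-!
Comparing coefficients, `b hⱼ ≡ c F(h_{j/p}) (mod pⁿ)`, where the right side is read as `0`
when `p ∤ j`. Hence `hₘ ≡ 0` for `p ∤ m`, and since `F` fixes `p`, divisibility by `pⁿ`
propagates from `hⱼ` to `h_{pj}`; every nonzero index is some `pᵛ m` with `p ∤ m`. A
coefficient prime to `p` must then be `h₀`, which is a unit because `W(k)` is a discrete
valuation ring with uniformizer `p`.
-/

/-- The Frobenius-semilinear map `φ` on the Laurent series ring `W(k)((u))`, sending
`Σ wᵢ uⁱ` to `Σ F(wᵢ) u^{p·i}`, where `F = WittVector.frobenius`. -/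
noncomputable def phiL (p : ℕ) [Fact p.Prime] {k : Type*} [CommRing k]
    (g : HahnSeries ℤ (WittVector p k)) : HahnSeries ℤ (WittVector p k) where
  coeff := fun j => if (p : ℤ) ∣ j then WittVector.frobenius (g.coeff (j / p)) else 0
  isPWO_support' := by
    have hsub : (Function.support fun j : ℤ =>
        if (p : ℤ) ∣ j then WittVector.frobenius (g.coeff (j / p)) else 0) ⊆
        (fun i : ℤ => (p : ℤ) * i) '' g.support := by
      intro j hj
      simp only [Function.mem_support] at hj
      by_cases hd : (p : ℤ) ∣ j
      · refine ⟨j / p, ?_, Int.mul_ediv_cancel' hd⟩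
        intro h0
        apply hj
        rw [if_pos hd, h0, map_zero]
      · exact absurd (if_neg hd) hj
    have hmono : Monotone (fun i : ℤ => (p : ℤ) * i) := fun a b hab =>
      mul_le_mul_of_nonneg_left hab (Int.natCast_nonneg p)
    exact (g.isPWO_support.image_of_monotone hmono).mono hsub

open HahnSeries

theorem IsUnit.dvd_of_dvd_mul_sub {R : Type*} [CommRing R] {b d a y : R} (hb : IsUnit b)
    (h : d ∣ b * a - y) (hy : d ∣ y) : d ∣ a :=
  hb.dvd_mul_left.mp ((dvd_sub_left hy).mp h)

theorem Irreducible.isUnit_of_not_dvd {R : Type*} [CommRing R] [IsDomain R]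
    [IsDiscreteValuationRing R] {ϖ x : R} (hϖ : Irreducible ϖ) (hx : ¬ϖ ∣ x) : IsUnit x := by
  by_contra hu
  have hmax : x ∈ IsLocalRing.maximalIdeal R := hu
  rw [(IsDiscreteValuationRing.irreducible_iff_uniformizer ϖ).mp hϖ,
    Ideal.mem_span_singleton] at hmax
  exact hx hmax

theorem RingHom.natCast_pow_dvd_map {R S : Type*} [CommSemiring R] [CommSemiring S]
    (f : R →+* S) {q n : ℕ} {x : R} (hx : (q : R) ^ n ∣ x) : (q : S) ^ n ∣ f x := by
  simpa using map_dvd f hx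

section phiL

variable {p : ℕ} [Fact p.Prime] {k : Type*} [CommRing k]

theorem phiL_coeff_natCast_mul (g : HahnSeries ℤ (WittVector p k)) (m : ℤ) :
    (phiL p g).coeff (p * m) = WittVector.frobenius (g.coeff m) := by
  have hp : (p : ℤ) ≠ 0 := mod_cast (Fact.out : p.Prime).ne_zero
  simp [phiL, Int.mul_ediv_cancel_left _ hp]

theorem phiL_coeff_of_not_dvd (g : HahnSeries ℤ (WittVector p k)) {j : ℤ}
    (hj : ¬(p : ℤ) ∣ j) : (phiL p g).coeff j = 0 :=
  if_neg hj

variable {n : ℕ} {b c : WittVector p k} {h : HahnSeries ℤ (WittVector p k)}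

theorem pow_dvd_coeff_pow_mul_of_not_dvd (hb : IsUnit b)
    (hcong : ∀ j : ℤ, (p : WittVector p k) ^ n ∣ b * h.coeff j - c * (phiL p h).coeff j)
    {m : ℤ} (hm : ¬(p : ℤ) ∣ m) (v : ℕ) : (p : WittVector p k) ^ n ∣ h.coeff (p ^ v * m) := by
  induction v with
  | zero =>
    refine hb.dvd_of_dvd_mul_sub (by simpa using hcong m) ?_
    simp [phiL_coeff_of_not_dvd h hm]
  | succ v ih =>
    have hstep := hcong (p * (p ^ v * m))
    rw [phiL_coeff_natCast_mul] at hstep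
    rw [pow_succ', mul_assoc]
    exact hb.dvd_of_dvd_mul_sub hstep ((WittVector.frobenius.natCast_pow_dvd_map ih).mul_left c)

theorem pow_dvd_coeff_of_pow_dvd_coeff_sub_phiL (hb : IsUnit b)
    (hcong : ∀ j : ℤ, (p : WittVector p k) ^ n ∣
        (single (0 : ℤ) b * h - single (0 : ℤ) c * phiL p h).coeff j)
    {j : ℤ} (hj : j ≠ 0) : (p : WittVector p k) ^ n ∣ h.coeff j := by
  simp only [coeff_sub, coeff_single_zero_mul] at hcong
  have hfin : FiniteMultiplicity (p : ℤ) j :=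
    Int.finiteMultiplicity_iff.2 ⟨by simpa using (Fact.out : p.Prime).ne_one, hj⟩
  obtain ⟨m, hjm, hm⟩ := hfin.exists_eq_pow_mul_and_not_dvd
  rw [hjm]
  exact pow_dvd_coeff_pow_mul_of_not_dvd hb hcong hm _

end phiL

theorem semilinear_laurent_solution_constant_general
    (p n : ℕ) [Fact p.Prime] (hn : 1 ≤ n)
    (k : Type*) [Field k] [CharP k p] [PerfectRing k p]
    (b c : WittVector p k) (hb : IsUnit b)
    (h : HahnSeries ℤ (WittVector p k))
    (hcong : ∀ j : ℤ, (p : WittVector p k) ^ n ∣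
        (HahnSeries.single (0 : ℤ) b * h - HahnSeries.single (0 : ℤ) c * phiL p h).coeff j) :
    (∀ j : ℤ, j ≠ 0 → (p : WittVector p k) ^ n ∣ h.coeff j) ∧
      ((∃ j : ℤ, ¬ (p : WittVector p k) ∣ h.coeff j) → IsUnit (h.coeff 0)) := by
  have hdvd : ∀ j : ℤ, j ≠ 0 → (p : WittVector p k) ^ n ∣ h.coeff j :=
    fun j hj => pow_dvd_coeff_of_pow_dvd_coeff_sub_phiL hb hcong hj
  refine ⟨hdvd, ?_⟩
  rintro ⟨j, hj⟩
  obtain rfl : j = 0 := by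
    by_contra hj0
    exact hj ((dvd_pow_self _ (by omega)).trans (hdvd j hj0))
  exact (WittVector.irreducible p).isUnit_of_not_dvd hj

/-- **Solutions of `b·h ≡ c·φ(h) (mod pⁿ)` in `W((u))` are constant.**
Let `W = W(k)` for `k` a perfect field of characteristic `p`, `n ≥ 1`, `b, c ∈ W^×`,
and let `h ∈ W((u))` satisfy `b·h ≡ c·φ(h) (mod pⁿ)` (coefficientwise).  Then `h` is
congruent mod `pⁿ` to its degree-`0` coefficient `h₀` (every coefficient in nonzero degree
is divisible by `pⁿ`); and if moreover the reduction of `h` mod `p` is nonzero in `k((u))`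
(some coefficient of `h` is not divisible by `p`), then `h₀` is a unit of `W`. -/
theorem semilinear_laurent_solution_constant
    (p n : ℕ) [Fact p.Prime] (hn : 1 ≤ n)
    (k : Type*) [Field k] [CharP k p] [PerfectRing k p]
    (b c : WittVector p k) (hb : IsUnit b) (hc : IsUnit c)
    (h : HahnSeries ℤ (WittVector p k))
    (hcong : ∀ j : ℤ, (p : WittVector p k) ^ n ∣
        (HahnSeries.single (0 : ℤ) b * h - HahnSeries.single (0 : ℤ) c * phiL p h).coeff j) :
    (∀ j : ℤ, j ≠ 0 → (p : WittVector p k) ^ n ∣ h.coeff j) ∧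
      ((∃ j : ℤ, ¬ (p : WittVector p k) ∣ h.coeff j) → IsUnit (h.coeff 0)) :=
  semilinear_laurent_solution_constant_general p n hn k b c hb h hcong
end

section
/- Let e ≥ 1 and let j₁, j₂ be integers with j₁ > j₂ ≥ 0 and e − (p−1)(j₁ + j₂) ≥ 0. Let F ∈ k((u)) be a nonzero Laurent series of u-adic order 0, and let f ∈ k((u)) be such that g := u^{e+j₁}·f^p − u^{e+j₁−(p−1)j₂}·f is either zero or has u-adic order ≥ e − (p−1)(j₁ + j₂). Then u^{j₁−p·j₂}·F + g has no nonzero coefficient in negative degrees (i.e. is zero or has u-adic order ≥ 0) if and only if j₁ ≥ p·j₂. -/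
/-!
The condition says that `u^{j₁ - p j₂} F + g` has nonnegative `u`-adic valuation. Since
`e - (p-1)(j₁+j₂) ≥ 0`, the term `g` already has nonnegative valuation, so by the ultrametric
inequality the condition holds exactly when `u^{j₁ - p j₂} F` has nonnegative valuation, and that
valuation is `j₁ - p j₂` because `F` has order `0`.
-/

namespace HahnSeries

variable {Γ R : Type*} [LinearOrder Γ]

theorem forall_coeff_lt_eq_zero_iff [Zero R] {x : R⟦Γ⟧} {a : Γ} :
    (∀ j : Γ, j < a → x.coeff j = 0) ↔ (a : WithTop Γ) ≤ x.orderTop := by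
  simp [le_orderTop_iff_forall]

theorem le_orderTop_add_iff_left [AddMonoid R] {x y : R⟦Γ⟧} {a : WithTop Γ}
    (hy : a ≤ y.orderTop) : a ≤ (x + y).orderTop ↔ a ≤ x.orderTop := by
  refine ⟨fun hxy => ?_, fun hx => (le_min hx hy).trans min_orderTop_le_orderTop_add⟩
  by_contra! hx
  exact (orderTop_add_eq_left (hx.trans_le hy) ▸ hxy).not_gt hx

end HahnSeries

open HahnSeries in
theorem second_valuation_condition_iff_general
    (p : ℕ) (k : Type*) [Field k]
    (e : ℕ) (j₁ j₂ : ℤ)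
    (hej : 0 ≤ (e : ℤ) - ((p : ℤ) - 1) * (j₁ + j₂))
    (F : LaurentSeries k) (hF : F ≠ 0) (hFord : F.order = 0)
    (g : LaurentSeries k)
    (hgord : g = 0 ∨ (e : ℤ) - ((p : ℤ) - 1) * (j₁ + j₂) ≤ g.order) :
    ((∀ j : ℤ, j < 0 →
        (HahnSeries.single (j₁ - (p : ℤ) * j₂) (1 : k) * F + g).coeff j = 0) ↔
      (p : ℤ) * j₂ ≤ j₁) := by
  have hg : 0 ≤ g.orderTop := by
    refine zero_le_orderTop_iff.2 ?_
    rcases hgord with rfl | hord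
    · exact order_zero.ge
    · exact hej.trans hord
  have hFtop : F.orderTop = 0 := by rw [orderTop_of_ne_zero hF, ← order_of_ne hF, hFord]; rfl
  rw [forall_coeff_lt_eq_zero_iff, WithTop.coe_zero, le_orderTop_add_iff_left hg, orderTop_mul,
    orderTop_single one_ne_zero, hFtop, add_zero, ← WithTop.coe_zero, WithTop.coe_le_coe, sub_nonneg]

/-- **Simplification of the second valuation condition for Hopf orders in `KC_{p²}`.**
Let `k` be a field of characteristic `p`, `e ≥ 1`, and `j₁ > j₂ ≥ 0` integers with
`e − (p−1)(j₁+j₂) ≥ 0`.  Let `F ∈ k((u))` be nonzero of `u`-adic order `0`, and let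
`f ∈ k((u))` be such that `g = u^{e+j₁}·f^p − u^{e+j₁−(p−1)j₂}·f` is zero or has
`u`-adic order `≥ e − (p−1)(j₁+j₂)`.  Then `u^{j₁−p·j₂}·F + g` has no nonzero coefficient
in negative degrees if and only if `j₁ ≥ p·j₂`. -/
theorem second_valuation_condition_iff
    (p : ℕ) (hp : p.Prime) (k : Type*) [Field k] [CharP k p]
    (e : ℕ) (he : 1 ≤ e) (j₁ j₂ : ℤ) (hj : j₂ < j₁) (hj₂ : 0 ≤ j₂)
    (hej : 0 ≤ (e : ℤ) - ((p : ℤ) - 1) * (j₁ + j₂))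
    (F : LaurentSeries k) (hF : F ≠ 0) (hFord : F.order = 0)
    (f g : LaurentSeries k)
    (hg : g = HahnSeries.single ((e : ℤ) + j₁) (1 : k) * f ^ p -
        HahnSeries.single ((e : ℤ) + j₁ - ((p : ℤ) - 1) * j₂) (1 : k) * f)
    (hgord : g = 0 ∨ (e : ℤ) - ((p : ℤ) - 1) * (j₁ + j₂) ≤ g.order) :
    ((∀ j : ℤ, j < 0 →
        (HahnSeries.single (j₁ - (p : ℤ) * j₂) (1 : k) * F + g).coeff j = 0) ↔
      (p : ℤ) * j₂ ≤ j₁) :=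
  second_valuation_condition_iff_general p k e j₁ j₂ hej F hF hFord g hgord
end

section
/- Let p be a prime and n ≥ 1. In the Laurent series ring (ℤ/p^nℤ)((u)), set t = (1+u)^{p^{n−1}} and τ = (1+u^p)^{p^{n−1}}. Then t − 1 and 1 − τ are units of (ℤ/p^nℤ)((u)), t^p = (1+u)^{p^n} = τ as elements of (ℤ/p^nℤ)[u], and (Σ_{i=0}^{p−1} t^i)·(1 − τ)⁻¹ = (1 − t)⁻¹. -/
/-- Binomial divisibility: `p ∣ (1+v)^(p^j) - 1 - v^(p^j)` in any commutative ring. -/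
lemma cyclotomic_aux_dvd {R : Type*} [CommRing R] (p j : ℕ) (hp : p.Prime) (v : R) :
    (p : R) ∣ (1 + v) ^ p ^ j - 1 - v ^ p ^ j := by
  have hm1 : 1 ≤ p ^ j := Nat.one_le_pow _ _ hp.pos
  obtain ⟨m', hm⟩ : ∃ m', p ^ j = m' + 1 := ⟨p ^ j - 1, by omega⟩
  rw [hm]
  have h := add_pow v 1 (m' + 1)
  simp only [one_pow, mul_one] at h
  rw [Finset.sum_range_succ, Finset.sum_range_succ'] at h
  have : (1 + v) ^ (m' + 1) - 1 - v ^ (m' + 1) =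
      ∑ i ∈ Finset.range m', v ^ (i + 1) * ((m' + 1).choose (i + 1) : R) := by
    rw [add_comm (1 : R) v, h, Nat.choose_self, Nat.choose_zero_right]
    push_cast
    ring
  rw [this]
  refine Finset.dvd_sum fun i hi => Dvd.dvd.mul_left ?_ _
  have hi' := Finset.mem_range.mp hi
  have hd : p ∣ (m' + 1).choose (i + 1) := by
    rw [← hm]
    exact Nat.Prime.dvd_choose_pow hp (by omega) (by omega)
  exact_mod_cast Nat.cast_dvd_cast (α := R) hd

/-- `(1+v)^(p^j) - 1` is a unit when `v` is a unit and `p` is nilpotent. -/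
lemma cyclotomic_aux_isUnit {R : Type*} [CommRing R] (p j : ℕ) (hp : p.Prime)
    (hpnil : IsNilpotent (p : R)) (v : R) (hv : IsUnit v) :
    IsUnit ((1 + v) ^ p ^ j - 1) := by
  obtain ⟨g, hg⟩ := cyclotomic_aux_dvd p j hp v
  have key : (1 + v) ^ p ^ j - 1 = v ^ p ^ j + (p : R) * g := by
    rw [← hg]; ring
  rw [key]
  exact ((Commute.all ((p : R)) g).isNilpotent_mul_right hpnil).isUnit_add_left_of_commute (hv.pow _) (Commute.all _ _)

/-- **The cyclotomic example: `μ_{pⁿ} ≅ ℤ/pⁿℤ` over `ℚ_p(ζ_{pⁿ})`, on Laurent series.**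
Work in the Laurent series ring over `ℤ/pⁿℤ = Wₙ(𝔽_p)` and set
`t = (1+u)^{p^{n−1}}` and `τ = φ(t) = (1+u^p)^{p^{n−1}}`.  Then `t − 1` and `1 − τ`
are units, `t^p = (1+u)^{pⁿ} = τ`, and `(Σ_{i=0}^{p−1} tⁱ)·(1 − τ)⁻¹ = (1 − t)⁻¹`
(the Eisenstein polynomial of `ℚ_p(ζ_{pⁿ})` is `E = Σ_{i=0}^{p−1} tⁱ`, and
`e₁ ↦ (1−t)⁻¹e₁` is an isomorphism `(𝔖ₙe₁[u⁻¹], φ₁) → (𝔖ₙe₁[u⁻¹], φ_E)`). -/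
theorem cyclotomic_laurent_identity
    (p n : ℕ) (hp : p.Prime) (hn : 1 ≤ n)
    (t τ : LaurentSeries (ZMod (p ^ n)))
    (ht : t = (1 + HahnSeries.single (1 : ℤ) (1 : ZMod (p ^ n))) ^ p ^ (n - 1))
    (hτ : τ = (1 + HahnSeries.single (1 : ℤ) (1 : ZMod (p ^ n)) ^ p) ^ p ^ (n - 1)) :
    IsUnit (t - 1) ∧ IsUnit (1 - τ) ∧ t ^ p = τ ∧
      (∑ i ∈ Finset.range p, t ^ i) * Ring.inverse (1 - τ) = Ring.inverse (1 - t) := by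
  set u : LaurentSeries (ZMod (p ^ n)) := HahnSeries.single (1 : ℤ) (1 : ZMod (p ^ n)) with hu
  -- p^n = 0 in R
  have hpn0 : ((p : LaurentSeries (ZMod (p ^ n)))) ^ n = 0 := by
    have : ((p ^ n : ℕ) : LaurentSeries (ZMod (p ^ n))) = 0 := by
      have : ((p ^ n : ℕ) : ZMod (p ^ n)) = 0 := ZMod.natCast_self _
      rw [← map_natCast (HahnSeries.C : ZMod (p ^ n) →+* LaurentSeries (ZMod (p ^ n))) (p ^ n), this, map_zero]
    rwa [Nat.cast_pow] at this
  have hpnil : IsNilpotent (p : LaurentSeries (ZMod (p ^ n))) := ⟨n, hpn0⟩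
  -- u is a unit
  have hu_unit : IsUnit u := by
    refine IsUnit.of_mul_eq_one (a := u) (HahnSeries.single (-1 : ℤ) (1 : ZMod (p ^ n))) ?_
    rw [hu, HahnSeries.single_mul_single, mul_one]
    norm_num [HahnSeries.single_zero_one]
  -- t - 1 unit
  have h1 : IsUnit (t - 1) := by
    rw [ht]
    exact cyclotomic_aux_isUnit p (n - 1) hp hpnil u hu_unit
  -- 1 - τ unit
  have h2 : IsUnit (1 - τ) := by
    rw [← IsUnit.neg_iff, neg_sub, hτ]
    exact cyclotomic_aux_isUnit p (n - 1) hp hpnil (u ^ p) (hu_unit.pow p)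
  -- t^p = τ
  have h3 : t ^ p = τ := by
    have hdvd : (p : LaurentSeries (ZMod (p ^ n))) ∣ (1 + u) ^ p - (1 + u ^ p) := by
      have := cyclotomic_aux_dvd p 1 hp u
      rw [pow_one] at this
      have e : (1 + u) ^ p - (1 + u ^ p) = (1 + u) ^ p - 1 - u ^ p := by ring
      rwa [e]
    have := dvd_sub_pow_of_dvd_sub hdvd (n - 1)
    rw [Nat.sub_add_cancel hn] at this
    obtain ⟨c, hc⟩ := this
    have : t ^ p - τ = 0 := by
      rw [ht, hτ, ← pow_mul, mul_comm (p ^ (n - 1)) p, pow_mul, hc, hpn0, zero_mul]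
    exact sub_eq_zero.mp this
  -- geometric sum identity
  have key : (∑ i ∈ Finset.range p, t ^ i) * (1 - t) = 1 - τ := by
    have := geom_sum_mul t p
    have e : (∑ i ∈ Finset.range p, t ^ i) * (1 - t) =
        -((∑ i ∈ Finset.range p, t ^ i) * (t - 1)) := by ring
    rw [e, this, h3]; ring
  refine ⟨h1, h2, h3, ?_⟩
  have h1' : IsUnit (1 - t) := by rwa [← IsUnit.neg_iff, neg_sub] at h1
  calc (∑ i ∈ Finset.range p, t ^ i) * Ring.inverse (1 - τ)
      = (∑ i ∈ Finset.range p, t ^ i) * Ring.inverse (1 - τ) *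
        ((1 - t) * Ring.inverse (1 - t)) := by
        rw [Ring.mul_inverse_cancel _ h1', mul_one]
    _ = ((∑ i ∈ Finset.range p, t ^ i) * (1 - t)) * Ring.inverse (1 - τ) *
        Ring.inverse (1 - t) := by ring
    _ = (1 - τ) * Ring.inverse (1 - τ) * Ring.inverse (1 - t) := by rw [key]
    _ = Ring.inverse (1 - t) := by rw [Ring.mul_inverse_cancel _ h2, one_mul]
end
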